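/- Let p ∈ (1,∞), Λ > 0, M > 0 and μ ∈ (0,1]. There exist ε > 0 and μ' > 0, depending only on p, Λ, M and μ, with the following property: whenever A ∈ ℂ^{d×d}, b, c ∈ ℂ^d and V ≥ 0 real satisfy |⟨Aξ,σ⟩| ≤ Λ|ξ||σ| for all ξ, σ ∈ ℂ^d, |b − c| ≤ M√V, and Γ_p^{(A,b,c,V)}(ξ) ≥ μ(|ξ|² + V) for all ξ ∈ ℂ^d, then for every s ∈ [p−ε, p+ε] with s > 1 one has Γ_s^{(A,b,c,V)}(ξ) ≥ μ'(|ξ|² + V) for all ξ ∈ ℂ^d. -/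

import Mathlib

open scoped ComplexConjugate

/-- The ℝ-linear operator `𝒥_p ξ = (p/2)(ξ + (1 − 2/p)·conj ξ)` on `ℂ^d`. -/
noncomputable def Jmap (p : ℝ) {d : ℕ} (ξ : EuclideanSpace ℂ (Fin d)) :
    EuclideanSpace ℂ (Fin d) :=
  WithLp.toLp 2 (fun i => (p / 2 : ℂ) * (ξ i + ((1 - 2 / p : ℝ) : ℂ) * conj (ξ i)))

/-- The Hermitian inner product `⟨x,y⟩ = ∑ x i * conj (y i)`, linear in the first variable. -/
noncomputable def hip {d : ℕ} (x y : EuclideanSpace ℂ (Fin d)) : ℂ :=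
  @inner ℂ _ _ y x

/-- A matrix acting on `ℂ^d`. -/
noncomputable def mulVecE {d : ℕ} (A : Matrix (Fin d) (Fin d) ℂ)
    (ξ : EuclideanSpace ℂ (Fin d)) : EuclideanSpace ℂ (Fin d) :=
  WithLp.toLp 2 (fun i => A.mulVec (fun j => ξ j) i)

/-- `Γ_p^{(A,b,c,V)}(ξ) = Re⟨Aξ, 𝒥_p ξ⟩ + Re⟨b + 𝒥_p c, ξ⟩ + V`. -/
noncomputable def Gamma (p : ℝ) {d : ℕ} (A : Matrix (Fin d) (Fin d) ℂ)
    (b c : EuclideanSpace ℂ (Fin d)) (V : ℝ) (ξ : EuclideanSpace ℂ (Fin d)) : ℝ :=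
  (hip (mulVecE A ξ) (Jmap p ξ)).re + (hip (b + Jmap p c) ξ).re + V

/-!
Componentwise `𝒥_p z = (p - 1) Re z + i Im z`, so `𝒥_s - 𝒥_p = (s - p) Re` and
`Γ_s(ξ) ≥ Γ_p(ξ) - |s - p| (Λ |ξ|² + |c| |ξ|)`. It remains to bound `|c|` by a multiple of `√V`.
Since `Γ_p ≥ 0` and its quadratic part is at most `Λ p |ξ|²`, testing at the minimiser of
`Λ p |ξ|² + Re⟨b + 𝒥_p c, ξ⟩ + V` gives `|b + 𝒥_p c|² ≤ 4 Λ p V`; then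
`|c| ≤ |c + 𝒥_p c| ≤ |b + 𝒥_p c| + |b - c|`.
-/

lemma norm_sq_le_of_forall_nonneg_quadratic {𝕜 E : Type*} [RCLike 𝕜] [NormedAddCommGroup E]
    [InnerProductSpace 𝕜 E] {w : E} {C V : ℝ} (hC : 0 < C)
    (h : ∀ x : E, 0 ≤ C * ‖x‖ ^ 2 + RCLike.re (inner 𝕜 x w) + V) : ‖w‖ ^ 2 ≤ 4 * C * V := by
  have key := h (((-(2 * C)⁻¹ : ℝ) : 𝕜) • w)
  rw [norm_smul, RCLike.norm_ofReal, inner_smul_real_left, RCLike.smul_re, inner_self_eq_norm_sq,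
    abs_neg, abs_of_pos (by positivity)] at key
  field_simp at key
  nlinarith

lemma Complex.norm_le_mul_norm_of_abs_re_le_of_abs_im_le {z w : ℂ} {a : ℝ} (ha : 0 ≤ a)
    (hre : |z.re| ≤ a * |w.re|) (him : |z.im| ≤ a * |w.im|) : ‖z‖ ≤ a * ‖w‖ := by
  rw [Complex.norm_eq_sqrt_sq_add_sq, Complex.norm_eq_sqrt_sq_add_sq,
    ← Real.sqrt_sq ha, ← Real.sqrt_mul (sq_nonneg a)]
  gcongr
  rw [← sq_abs z.re, ← sq_abs z.im, ← sq_abs w.re, ← sq_abs w.im]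
  nlinarith [pow_le_pow_left₀ (abs_nonneg _) hre 2, pow_le_pow_left₀ (abs_nonneg _) him 2]

lemma EuclideanSpace.norm_le_mul_norm_of_forall_norm_apply_le {𝕜 ι : Type*} [RCLike 𝕜]
    [Fintype ι] {x y : EuclideanSpace 𝕜 ι} {a : ℝ} (ha : 0 ≤ a) (h : ∀ i, ‖x i‖ ≤ a * ‖y i‖) :
    ‖x‖ ≤ a * ‖y‖ := by
  refine le_of_sq_le_sq ?_ (by positivity)
  rw [EuclideanSpace.norm_sq_eq, mul_pow, EuclideanSpace.norm_sq_eq, Finset.mul_sum]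
  gcongr with i
  rw [← mul_pow]
  exact pow_le_pow_left₀ (norm_nonneg _) (h i) 2

section Jmap

variable {d : ℕ} {p : ℝ} (ξ : EuclideanSpace ℂ (Fin d)) (i : Fin d)

lemma Jmap_apply_re (hp : p ≠ 0) : (Jmap p ξ i).re = (p - 1) * (ξ i).re := by
  simp only [Jmap, Complex.mul_re, Complex.mul_im, Complex.add_re, Complex.add_im,
    Complex.conj_re, Complex.conj_im, Complex.ofReal_re, Complex.ofReal_im, Complex.div_ofNat_re,
    Complex.div_ofNat_im]
  field_simp
  ring

lemma Jmap_apply_im (hp : p ≠ 0) : (Jmap p ξ i).im = (ξ i).im := by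
  simp only [Jmap, Complex.mul_re, Complex.mul_im, Complex.add_re, Complex.add_im,
    Complex.conj_re, Complex.conj_im, Complex.ofReal_re, Complex.ofReal_im, Complex.div_ofNat_re,
    Complex.div_ofNat_im]
  field_simp
  ring

lemma norm_Jmap_le (hp : 1 ≤ p) : ‖Jmap p ξ‖ ≤ p * ‖ξ‖ := by
  have hp₀ : p ≠ 0 := by positivity
  refine EuclideanSpace.norm_le_mul_norm_of_forall_norm_apply_le (by positivity) fun i ↦
    Complex.norm_le_mul_norm_of_abs_re_le_of_abs_im_le (by positivity) ?_ ?_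
  · rw [Jmap_apply_re _ _ hp₀, abs_mul, abs_of_nonneg (by linarith : 0 ≤ p - 1)]
    gcongr
    linarith
  · rw [Jmap_apply_im _ _ hp₀]
    exact le_mul_of_one_le_left (abs_nonneg _) hp

lemma norm_le_norm_add_Jmap (hp : 1 ≤ p) : ‖ξ‖ ≤ ‖ξ + Jmap p ξ‖ := by
  have hp₀ : p ≠ 0 := by positivity
  rw [← one_mul ‖ξ + Jmap p ξ‖]
  refine EuclideanSpace.norm_le_mul_norm_of_forall_norm_apply_le zero_le_one fun i ↦
    Complex.norm_le_mul_norm_of_abs_re_le_of_abs_im_le zero_le_one ?_ ?_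
  · rw [PiLp.add_apply, Complex.add_re, Jmap_apply_re _ _ hp₀, one_mul]
    rw [show (ξ i).re + (p - 1) * (ξ i).re = p * (ξ i).re by ring, abs_mul,
      abs_of_pos (by linarith : 0 < p)]
    exact le_mul_of_one_le_left (abs_nonneg _) hp
  · rw [PiLp.add_apply, Complex.add_im, Jmap_apply_im _ _ hp₀, one_mul, ← two_mul, abs_mul,
      abs_two]
    exact le_mul_of_one_le_left (abs_nonneg _) one_le_two

lemma norm_Jmap_sub_Jmap_le {s : ℝ} (hs : s ≠ 0) (hp : p ≠ 0) :
    ‖Jmap s ξ - Jmap p ξ‖ ≤ |s - p| * ‖ξ‖ := by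
  refine EuclideanSpace.norm_le_mul_norm_of_forall_norm_apply_le (abs_nonneg _) fun i ↦
    Complex.norm_le_mul_norm_of_abs_re_le_of_abs_im_le (abs_nonneg _) ?_ ?_
  · rw [PiLp.sub_apply, Complex.sub_re, Jmap_apply_re _ _ hs, Jmap_apply_re _ _ hp, ← abs_mul]
    exact (congrArg abs (by ring)).le
  · rw [PiLp.sub_apply, Complex.sub_im, Jmap_apply_im _ _ hs, Jmap_apply_im _ _ hp, sub_self,
      abs_zero]
    positivity

end Jmap

lemma neg_norm_mul_norm_le_re_hip {d : ℕ} (x y : EuclideanSpace ℂ (Fin d)) :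
    -(‖x‖ * ‖y‖) ≤ (hip x y).re :=
  (neg_le_neg ((norm_inner_le_norm y x).trans_eq (mul_comm _ _))).trans
    (neg_le_of_abs_le (Complex.abs_re_le_norm _))

section Gamma

variable {d : ℕ} {p Λ M V : ℝ} {A : Matrix (Fin d) (Fin d) ℂ} {b c : EuclideanSpace ℂ (Fin d)}

lemma Gamma_le (hp : 1 ≤ p) (hΛ : 0 ≤ Λ)
    (hA : ∀ ξ σ : EuclideanSpace ℂ (Fin d), ‖hip (mulVecE A ξ) σ‖ ≤ Λ * ‖ξ‖ * ‖σ‖)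
    (ξ : EuclideanSpace ℂ (Fin d)) :
    Gamma p A b c V ξ ≤ Λ * p * ‖ξ‖ ^ 2 + (hip (b + Jmap p c) ξ).re + V := by
  have hJ : ‖hip (mulVecE A ξ) (Jmap p ξ)‖ ≤ Λ * p * ‖ξ‖ ^ 2 := calc
    _ ≤ Λ * ‖ξ‖ * ‖Jmap p ξ‖ := hA _ _
    _ ≤ Λ * ‖ξ‖ * (p * ‖ξ‖) := by gcongr; exact norm_Jmap_le ξ hp
    _ = Λ * p * ‖ξ‖ ^ 2 := by ring
  rw [Gamma]
  linarith [Complex.re_le_norm (hip (mulVecE A ξ) (Jmap p ξ))]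

lemma norm_add_Jmap_sq_le (hp : 1 ≤ p) (hΛ : 0 < Λ)
    (hA : ∀ ξ σ : EuclideanSpace ℂ (Fin d), ‖hip (mulVecE A ξ) σ‖ ≤ Λ * ‖ξ‖ * ‖σ‖)
    (hΓ : ∀ ξ, 0 ≤ Gamma p A b c V ξ) : ‖b + Jmap p c‖ ^ 2 ≤ 4 * (Λ * p) * V :=
  norm_sq_le_of_forall_nonneg_quadratic (𝕜 := ℂ) (by positivity) fun ξ ↦
    (hΓ ξ).trans (Gamma_le hp hΛ.le hA ξ)

lemma norm_le_of_forall_nonneg_Gamma (hp : 1 ≤ p) (hΛ : 0 < Λ)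
    (hA : ∀ ξ σ : EuclideanSpace ℂ (Fin d), ‖hip (mulVecE A ξ) σ‖ ≤ Λ * ‖ξ‖ * ‖σ‖)
    (hbc : ‖b - c‖ ≤ M * √V) (hΓ : ∀ ξ, 0 ≤ Gamma p A b c V ξ) :
    ‖c‖ ≤ (√(4 * (Λ * p)) + M) * √V := calc
  ‖c‖ ≤ ‖c + Jmap p c‖ := norm_le_norm_add_Jmap c hp
  _ = ‖(b + Jmap p c) - (b - c)‖ := by congr 1; abel
  _ ≤ ‖b + Jmap p c‖ + ‖b - c‖ := norm_sub_le _ _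
  _ ≤ √(4 * (Λ * p)) * √V + M * √V := by
    gcongr
    rw [← Real.sqrt_mul (by positivity), ← abs_norm]
    exact Real.abs_le_sqrt (norm_add_Jmap_sq_le hp hΛ hA hΓ)
  _ = (√(4 * (Λ * p)) + M) * √V := by ring

lemma Gamma_eq_Gamma_add (s p : ℝ) (ξ : EuclideanSpace ℂ (Fin d)) :
    Gamma s A b c V ξ = Gamma p A b c V ξ + (hip (mulVecE A ξ) (Jmap s ξ - Jmap p ξ)).re
      + (hip (Jmap s c - Jmap p c) ξ).re := by
  simp only [Gamma, hip, inner_sub_left, inner_sub_right, inner_add_right, Complex.sub_re,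
    Complex.add_re]
  ring

lemma Gamma_sub_le_Gamma {s : ℝ} (hs : s ≠ 0) (hp : p ≠ 0) (hΛ : 0 ≤ Λ)
    (hA : ∀ ξ σ : EuclideanSpace ℂ (Fin d), ‖hip (mulVecE A ξ) σ‖ ≤ Λ * ‖ξ‖ * ‖σ‖)
    (ξ : EuclideanSpace ℂ (Fin d)) :
    Gamma p A b c V ξ - |s - p| * (Λ * ‖ξ‖ ^ 2 + ‖c‖ * ‖ξ‖) ≤ Gamma s A b c V ξ := by
  have hA' : -(|s - p| * (Λ * ‖ξ‖ ^ 2)) ≤ (hip (mulVecE A ξ) (Jmap s ξ - Jmap p ξ)).re := calc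
    _ = -(Λ * ‖ξ‖ * (|s - p| * ‖ξ‖)) := by ring
    _ ≤ -(Λ * ‖ξ‖ * ‖Jmap s ξ - Jmap p ξ‖) := by
      gcongr; exact norm_Jmap_sub_Jmap_le ξ hs hp
    _ ≤ -‖hip (mulVecE A ξ) (Jmap s ξ - Jmap p ξ)‖ := neg_le_neg (hA _ _)
    _ ≤ _ := neg_le_of_abs_le (Complex.abs_re_le_norm _)
  have hc : -(|s - p| * (‖c‖ * ‖ξ‖)) ≤ (hip (Jmap s c - Jmap p c) ξ).re := calc
    _ ≤ -(‖Jmap s c - Jmap p c‖ * ‖ξ‖) := by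
      rw [← mul_assoc]; gcongr; exact norm_Jmap_sub_Jmap_le c hs hp
    _ ≤ _ := neg_norm_mul_norm_le_re_hip _ _
  rw [Gamma_eq_Gamma_add s p]
  linarith

end Gamma

theorem stmt5_general (p Λ M μ : ℝ) (hp : 1 < p)
    (hΛ : 0 < Λ) (hM : 0 < M) (hμ0 : 0 < μ) :
    ∃ ε μ' : ℝ, 0 < ε ∧ 0 < μ' ∧
      ∀ (d : ℕ), 1 ≤ d →
        ∀ (A : Matrix (Fin d) (Fin d) ℂ) (b c : EuclideanSpace ℂ (Fin d)) (V : ℝ),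
          0 ≤ V →
          (∀ ξ σ : EuclideanSpace ℂ (Fin d),
            ‖hip (mulVecE A ξ) σ‖ ≤ Λ * ‖ξ‖ * ‖σ‖) →
          ‖b - c‖ ≤ M * Real.sqrt V →
          (∀ ξ : EuclideanSpace ℂ (Fin d), μ * (‖ξ‖ ^ 2 + V) ≤ Gamma p A b c V ξ) →
          ∀ s : ℝ, p - ε ≤ s → s ≤ p + ε → 1 < s →
            ∀ ξ : EuclideanSpace ℂ (Fin d), μ' * (‖ξ‖ ^ 2 + V) ≤ Gamma s A b c V ξ := by
  set C := √(4 * (Λ * p)) + M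
  have hC : 0 ≤ C := by positivity
  refine ⟨μ / (2 * (Λ + C)), μ / 2, by positivity, by positivity, ?_⟩
  intro d _ A b c V hV hA hbc hΓ s hs₁ hs₂ hs ξ
  have hc : ‖c‖ ≤ C * √V := norm_le_of_forall_nonneg_Gamma hp.le hΛ hA hbc fun ξ ↦
    (by positivity : 0 ≤ μ * (‖ξ‖ ^ 2 + V)).trans (hΓ ξ)
  have hcξ : ‖c‖ * ‖ξ‖ ≤ C * (‖ξ‖ ^ 2 + V) := calc
    ‖c‖ * ‖ξ‖ ≤ C * (√V * ‖ξ‖) := by rw [← mul_assoc]; gcongr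
    _ ≤ C * (‖ξ‖ ^ 2 + V) := by
      gcongr
      nlinarith [two_mul_le_add_sq (√V) ‖ξ‖, Real.sq_sqrt hV]
  have hsp : |s - p| * (Λ + C) ≤ μ / 2 := by
    rw [← le_div_iff₀ (by positivity), div_div]
    exact abs_sub_le_iff.mpr ⟨by linarith, by linarith⟩
  calc μ / 2 * (‖ξ‖ ^ 2 + V)
      ≤ μ * (‖ξ‖ ^ 2 + V) - |s - p| * (Λ + C) * (‖ξ‖ ^ 2 + V) := by nlinarith
    _ ≤ Gamma p A b c V ξ - |s - p| * (Λ * ‖ξ‖ ^ 2 + ‖c‖ * ‖ξ‖) := by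
      have hΛξ : Λ * ‖ξ‖ ^ 2 ≤ Λ * (‖ξ‖ ^ 2 + V) := by gcongr; linarith
      nlinarith [hΓ ξ, abs_nonneg (s - p), hΛξ]
    _ ≤ Gamma s A b c V ξ := Gamma_sub_le_Gamma (by positivity) (by positivity) hΛ.le hA ξ

theorem stmt5 (p Λ M μ : ℝ) (hp : 1 < p)
    (hΛ : 0 < Λ) (hM : 0 < M) (hμ0 : 0 < μ) (hμ1 : μ ≤ 1) :
    ∃ ε μ' : ℝ, 0 < ε ∧ 0 < μ' ∧
      ∀ (d : ℕ), 1 ≤ d →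
        ∀ (A : Matrix (Fin d) (Fin d) ℂ) (b c : EuclideanSpace ℂ (Fin d)) (V : ℝ),
          0 ≤ V →
          (∀ ξ σ : EuclideanSpace ℂ (Fin d),
            ‖hip (mulVecE A ξ) σ‖ ≤ Λ * ‖ξ‖ * ‖σ‖) →
          ‖b - c‖ ≤ M * Real.sqrt V →
          (∀ ξ : EuclideanSpace ℂ (Fin d), μ * (‖ξ‖ ^ 2 + V) ≤ Gamma p A b c V ξ) →
          ∀ s : ℝ, p - ε ≤ s → s ≤ p + ε → 1 < s →
            ∀ ξ : EuclideanSpace ℂ (Fin d), μ' * (‖ξ‖ ^ 2 + V) ≤ Gamma s A b c V ξ :=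
  stmt5_general p Λ M μ hp hΛ hM hμ0
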